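/- arXiv:0901.3887 — 5 statements merged into one kernel-verified Lean document; each statement's English description precedes it below -/
import Mathlib

section
/- Let g>0, H>0, 0<l<1 and u₁≠u₂ be real numbers, and let the interface velocity u be equal to either u₁ or u₂. Then the characteristic polynomial D(x) = −x(2u₁−u−x)(2u₂−u−x) − l(2u₂−u−x)(gH−u₁²+ux) − (1−l)(2u₁−u−x)(gH−u₂²+ux) has three distinct real roots; consequently the two-layer multilayer Saint-Venant system is strictly hyperbolic when the total water height is strictly positive. -/
/-!
Shifting the unknown to `x = u₁ + y` when `u = u₁` turns `D` into the cubic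
`p(y) = (2a - y)(y² - l c) + (1 - l)(c - a²) y` with `a = u₂ - u₁ ≠ 0` and `c = gH > 0`; the case
`u = u₂` is the same after exchanging the layers, and `a < 0` reduces to `a > 0` since `p` is odd
in `(a, y)`. For `a > 0`, `p` is positive far to the left, negative at `0` (where it equals
`-2alc`), positive at `y = a` if `c ≤ a²` and at `y = √(lc)` if `c > a²`, and negative far to the
right, so the intermediate value theorem yields three distinct real roots.
-/

open Set

def HasThreeZeros (f : ℝ → ℝ) : Prop :=
  ∃ x₁ x₂ x₃, x₁ < x₂ ∧ x₂ < x₃ ∧ f x₁ = 0 ∧ f x₂ = 0 ∧ f x₃ = 0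

namespace HasThreeZeros

variable {f : ℝ → ℝ}

theorem of_sign_changes (hf : Continuous f) {x₀ x₁ x₂ x₃ : ℝ}
    (h₀₁ : x₀ < x₁) (h₁₂ : x₁ < x₂) (h₂₃ : x₂ < x₃)
    (hf₀ : 0 < f x₀) (hf₁ : f x₁ < 0) (hf₂ : 0 < f x₂) (hf₃ : f x₃ < 0) :
    HasThreeZeros f := by
  obtain ⟨y₁, hy₁, hfy₁⟩ := intermediate_value_Ioo' h₀₁.le hf.continuousOn
    (show (0 : ℝ) ∈ Ioo (f x₁) (f x₀) from ⟨hf₁, hf₀⟩)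
  obtain ⟨y₂, hy₂, hfy₂⟩ := intermediate_value_Ioo h₁₂.le hf.continuousOn
    (show (0 : ℝ) ∈ Ioo (f x₁) (f x₂) from ⟨hf₁, hf₂⟩)
  obtain ⟨y₃, hy₃, hfy₃⟩ := intermediate_value_Ioo' h₂₃.le hf.continuousOn
    (show (0 : ℝ) ∈ Ioo (f x₃) (f x₂) from ⟨hf₃, hf₂⟩)
  exact ⟨y₁, y₂, y₃, hy₁.2.trans hy₂.1, hy₂.2.trans hy₃.1, hfy₁, hfy₂, hfy₃⟩

theorem neg_comp_neg (h : HasThreeZeros f) : HasThreeZeros fun y => -f (-y) := by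
  obtain ⟨x₁, x₂, x₃, h₁₂, h₂₃, hf₁, hf₂, hf₃⟩ := h
  exact ⟨-x₃, -x₂, -x₁, neg_lt_neg h₂₃, neg_lt_neg h₁₂, by simp [hf₃], by simp [hf₂], by simp [hf₁]⟩

theorem of_comp_const_add (s : ℝ) (h : HasThreeZeros fun y => f (s + y)) : HasThreeZeros f := by
  obtain ⟨y₁, y₂, y₃, h₁₂, h₂₃, hf₁, hf₂, hf₃⟩ := h
  exact ⟨s + y₁, s + y₂, s + y₃, by linarith, by linarith, hf₁, hf₂, hf₃⟩

end HasThreeZeros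

theorem neg_cube_add_quadratic_neg_of_le {b₂ b₁ b₀ y : ℝ} (hy : 1 + |b₂| + |b₁| + |b₀| ≤ y) :
    -y ^ 3 + b₂ * y ^ 2 + b₁ * y + b₀ < 0 := by
  have hy₁ : 1 ≤ y := by linarith [abs_nonneg b₂, abs_nonneg b₁, abs_nonneg b₀]
  have h₂ : b₂ * y ^ 2 ≤ |b₂| * y ^ 2 := by gcongr; exact le_abs_self b₂
  have h₁ : b₁ * y ≤ |b₁| * y ^ 2 := by
    nlinarith [mul_le_mul_of_nonneg_right (le_abs_self b₁) (by linarith : (0 : ℝ) ≤ y),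
      mul_le_mul_of_nonneg_left (by nlinarith : y ≤ y ^ 2) (abs_nonneg b₁)]
  have h₀ : b₀ ≤ |b₀| * y ^ 2 := by
    nlinarith [le_abs_self b₀, mul_le_mul_of_nonneg_left (by nlinarith : 1 ≤ y ^ 2) (abs_nonneg b₀)]
  nlinarith [mul_le_mul_of_nonneg_left hy (sq_nonneg y)]

/-- The characteristic polynomial `D`, with `c` standing for `gH`. -/
def twoLayerCharPoly (c l u₁ u₂ u x : ℝ) : ℝ :=
  -x * (2 * u₁ - u - x) * (2 * u₂ - u - x)
    - l * (2 * u₂ - u - x) * (c - u₁ ^ 2 + u * x)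
    - (1 - l) * (2 * u₁ - u - x) * (c - u₂ ^ 2 + u * x)

theorem twoLayerCharPoly_swap (c l u₁ u₂ u : ℝ) :
    twoLayerCharPoly c (1 - l) u₂ u₁ u = twoLayerCharPoly c l u₁ u₂ u := by
  ext x; unfold twoLayerCharPoly; ring

def reducedCharPoly (a c l y : ℝ) : ℝ :=
  (2 * a - y) * (y ^ 2 - l * c) + (1 - l) * (c - a ^ 2) * y

theorem twoLayerCharPoly_const_add (c l u₁ u₂ y : ℝ) :
    twoLayerCharPoly c l u₁ u₂ u₁ (u₁ + y) = reducedCharPoly (u₂ - u₁) c l y := by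
  unfold twoLayerCharPoly reducedCharPoly; ring

theorem reducedCharPoly_neg (a c l y : ℝ) :
    reducedCharPoly (-a) c l (-y) = -reducedCharPoly a c l y := by
  unfold reducedCharPoly; ring

theorem reducedCharPoly_eq_cubic (a c l y : ℝ) :
    reducedCharPoly a c l y =
      -y ^ 3 + 2 * a * y ^ 2 + (c - (1 - l) * a ^ 2) * y - 2 * a * l * c := by
  unfold reducedCharPoly; ring

theorem exists_pos_reducedCharPoly_pos {a c l : ℝ} (ha : 0 < a) (hc : 0 < c) (hl0 : 0 < l)
    (hl1 : l < 1) : ∃ q, 0 < q ∧ 0 < reducedCharPoly a c l q := by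
  rcases le_or_gt c (a ^ 2) with hca | hca
  · refine ⟨a, ha, ?_⟩
    have hfa : reducedCharPoly a c l a = a * (l * (a ^ 2 - c) + (1 - l) * c) := by
      unfold reducedCharPoly; ring
    have : 0 < l * (a ^ 2 - c) + (1 - l) * c := by nlinarith
    rw [hfa]; positivity
  · have hs : 0 < √(l * c) := Real.sqrt_pos.2 (by positivity)
    refine ⟨√(l * c), hs, ?_⟩
    have hfs : reducedCharPoly a c l √(l * c) = (1 - l) * (c - a ^ 2) * √(l * c) := by
      unfold reducedCharPoly; rw [Real.sq_sqrt (by positivity)]; ring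
    rw [hfs]
    exact mul_pos (mul_pos (by linarith) (by linarith)) hs

theorem hasThreeZeros_reducedCharPoly_of_pos {a c l : ℝ} (ha : 0 < a) (hc : 0 < c) (hl0 : 0 < l)
    (hl1 : l < 1) : HasThreeZeros (reducedCharPoly a c l) := by
  obtain ⟨q, hq, hfq⟩ := exists_pos_reducedCharPoly_pos ha hc hl0 hl1
  set R := 1 + |2 * a| + |c - (1 - l) * a ^ 2| + |2 * a * l * c|
  have hR : 1 ≤ R := by
    linarith [abs_nonneg (2 * a), abs_nonneg (c - (1 - l) * a ^ 2), abs_nonneg (2 * a * l * c)]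
  refine HasThreeZeros.of_sign_changes (x₀ := -R) (x₁ := 0) (x₂ := q) (x₃ := R + q)
    (by unfold reducedCharPoly; fun_prop) (by linarith) hq (by linarith) ?_ ?_ hfq ?_
  · have := neg_cube_add_quadratic_neg_of_le (b₂ := -(2 * a)) (b₁ := c - (1 - l) * a ^ 2)
      (b₀ := 2 * a * l * c) (y := R) (by rw [abs_neg])
    rw [reducedCharPoly_eq_cubic]; linarith
  · rw [reducedCharPoly_eq_cubic]; nlinarith [mul_pos (mul_pos ha hl0) hc]
  · rw [reducedCharPoly_eq_cubic]
    exact neg_cube_add_quadratic_neg_of_le (by rw [abs_neg]; linarith)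

theorem hasThreeZeros_reducedCharPoly {a c l : ℝ} (ha : a ≠ 0) (hc : 0 < c) (hl0 : 0 < l)
    (hl1 : l < 1) : HasThreeZeros (reducedCharPoly a c l) := by
  rcases ha.lt_or_gt with hneg | hpos
  · have h := (hasThreeZeros_reducedCharPoly_of_pos (neg_pos.2 hneg) hc hl0 hl1).neg_comp_neg
    simpa only [reducedCharPoly_neg, neg_neg] using h
  · exact hasThreeZeros_reducedCharPoly_of_pos hpos hc hl0 hl1

theorem hasThreeZeros_twoLayerCharPoly {c l u₁ u₂ : ℝ} (hc : 0 < c) (hl0 : 0 < l) (hl1 : l < 1)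
    (hne : u₁ ≠ u₂) : HasThreeZeros (twoLayerCharPoly c l u₁ u₂ u₁) :=
  .of_comp_const_add u₁ <| by
    simpa only [twoLayerCharPoly_const_add] using
      hasThreeZeros_reducedCharPoly (sub_ne_zero.2 hne.symm) hc hl0 hl1

/-- The characteristic polynomial of the two-layer multilayer Saint-Venant system
has three distinct real roots, hence the system is strictly hyperbolic when the
total water height is strictly positive. -/
theorem two_layer_strict_hyperbolicity
    (g H l u₁ u₂ u : ℝ) (hg : 0 < g) (hH : 0 < H)
    (hl0 : 0 < l) (hl1 : l < 1) (hne : u₁ ≠ u₂)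
    (hu : u = u₁ ∨ u = u₂) :
    ∃ x₁ x₂ x₃ : ℝ, x₁ ≠ x₂ ∧ x₁ ≠ x₃ ∧ x₂ ≠ x₃ ∧
      ∀ x ∈ ({x₁, x₂, x₃} : Set ℝ),
        -x * (2 * u₁ - u - x) * (2 * u₂ - u - x)
          - l * (2 * u₂ - u - x) * (g * H - u₁ ^ 2 + u * x)
          - (1 - l) * (2 * u₁ - u - x) * (g * H - u₂ ^ 2 + u * x) = 0 := by
  have hc : 0 < g * H := mul_pos hg hH
  obtain ⟨x₁, x₂, x₃, h₁₂, h₂₃, hx₁, hx₂, hx₃⟩ :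
      HasThreeZeros (twoLayerCharPoly (g * H) l u₁ u₂ u) := by
    rcases hu with rfl | rfl
    · exact hasThreeZeros_twoLayerCharPoly hc hl0 hl1 hne
    · rw [← twoLayerCharPoly_swap]
      exact hasThreeZeros_twoLayerCharPoly (l := 1 - l) hc (by linarith) (by linarith) hne.symm
  refine ⟨x₁, x₂, x₃, h₁₂.ne, (h₁₂.trans h₂₃).ne, h₂₃.ne, ?_⟩
  rintro x (rfl | rfl | rfl)
  exacts [hx₁, hx₂, hx₃]
end

section
/- Let g, H, l, u be real numbers and take equal layer velocities u₁ = u₂ = u and interface velocity u. Then the characteristic polynomial factorizes as D(x) = (u−x)((u−x)² − gH); in particular, if gH>0 its roots are the baroclinic eigenvalue u and the barotropic eigenvalues u+√(gH) and u−√(gH), and these three roots are pairwise distinct. -/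
/-! With `u₁ = u₂ = u` every term of `D` carries the factor `u - x`, and the two layers enter
only through `l + (1 - l) = 1`, leaving `(u - x)² - gH`. For `gH > 0` this is the difference of
squares `(u - x)² - √(gH)²`, whose roots are `u ± √(gH)`. -/

theorem sub_mul_sq_sub_sq_eq_zero_iff {R : Type*} [CommRing R] [NoZeroDivisors R] (u s x : R) :
    (u - x) * ((u - x) ^ 2 - s ^ 2) = 0 ↔ x = u ∨ x = u + s ∨ x = u - s := by
  have hu : u - x = 0 ↔ x = u := sub_eq_zero.trans eq_comm
  have hplus : u - x = -s ↔ x = u + s := by constructor <;> intro h <;> linear_combination -h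
  have hminus : u - x = s ↔ x = u - s := by constructor <;> intro h <;> linear_combination -h
  rw [mul_eq_zero, hu, sub_eq_zero, sq_eq_sq_iff_eq_or_eq_neg, hplus, hminus,
    or_comm (a := x = u - s)]

theorem ne_add_and_ne_sub_and_add_ne_sub {α : Type*} [AddCommGroup α] [LinearOrder α]
    [IsOrderedAddMonoid α] (u : α) {s : α} (hs : 0 < s) :
    u ≠ u + s ∧ u ≠ u - s ∧ u + s ≠ u - s :=
  ⟨(lt_add_of_pos_right u hs).ne, (sub_lt_self u hs).ne',
    ((sub_lt_self u hs).trans (lt_add_of_pos_right u hs)).ne'⟩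

/-- With equal layer velocities `u₁ = u₂ = u` and interface velocity `u`, the
characteristic polynomial of the two-layer multilayer Saint-Venant system
factorizes as `D(x) = (u - x) * ((u - x)² - gH)`; if `gH > 0` its roots are
exactly `u`, `u + √(gH)` and `u - √(gH)`, which are pairwise distinct. -/
theorem two_layer_char_poly_equal_velocities (g H l u : ℝ) :
    (∀ x : ℝ,
      -x * (2 * u - u - x) * (2 * u - u - x)
        - l * (2 * u - u - x) * (g * H - u ^ 2 + u * x)
        - (1 - l) * (2 * u - u - x) * (g * H - u ^ 2 + u * x)
      = (u - x) * ((u - x) ^ 2 - g * H)) ∧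
    (0 < g * H →
      (∀ x : ℝ, (u - x) * ((u - x) ^ 2 - g * H) = 0 ↔
        x = u ∨ x = u + Real.sqrt (g * H) ∨ x = u - Real.sqrt (g * H)) ∧
      u ≠ u + Real.sqrt (g * H) ∧
      u ≠ u - Real.sqrt (g * H) ∧
      u + Real.sqrt (g * H) ≠ u - Real.sqrt (g * H)) := by
  refine ⟨fun x ↦ by ring, fun hgH ↦ ⟨fun x ↦ ?_, ?_⟩⟩
  · simpa only [Real.sq_sqrt hgH.le] using sub_mul_sq_sub_sq_eq_zero_iff u (Real.sqrt (g * H)) x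
  · exact ne_add_and_ne_sub_and_add_ne_sub u (Real.sqrt_pos.2 hgH)
end

section
/- Let H:ℝ²→(0,∞), u:ℝ²→ℝ and Φ:ℝ²→ℝ be C¹ functions of (x,t), and define M(x,t,ξ) = (lH(x,t)/c(x,t))·χ((ξ−u(x,t))/c(x,t)) with c=√(gH/2). Then for every (x,t): ∫_ℝ (∂ₜM + ξ∂ₓM − ∂ₓΦ·∂_ξM)(x,t,ξ)dξ = ∂ₜ(lH) + ∂ₓ(lHu), and ∫_ℝ ξ(∂ₜM + ξ∂ₓM − ∂ₓΦ·∂_ξM)(x,t,ξ)dξ = ∂ₜ(lHu) + ∂ₓ(lHu² + g l H²/2) + lH·∂ₓΦ. -/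
/-!
Write `ρ = l H` and `c = √(g H / 2)`, so that `M = (ρ / c) χ ((ξ - u) / c)`. The substitution
`ξ = u + c w` reduces the velocity moments of `M` to those of `χ`: `∫ M = ρ`, `∫ ξ M = ρ u` (as `χ`
is even) and `∫ ξ² M = ρ (u² + c²)`, where `ρ c² = g l H² / 2`. The `ξ`-support of `M` stays in a
fixed compact set while `(x, t)` ranges over a compact set, so `∂ₜ` and `∂ₓ` commute with these
moments, and integration by parts in `ξ` gives `∫ ∂_ξ M = 0` and `∫ ξ ∂_ξ M = -∫ M = -ρ`.
-/

open MeasureTheory Filter Topology Metric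

def HasLocallyUniformCompactSupport {P α E : Type*} [TopologicalSpace P] [TopologicalSpace α]
    [Zero E] (F : P → α → E) : Prop :=
  ∀ p₀, ∃ K, IsCompact K ∧ ∀ᶠ p in 𝓝 p₀, ∀ ξ ∉ K, F p ξ = 0

namespace HasLocallyUniformCompactSupport

variable {P Q α E : Type*} [TopologicalSpace P] [TopologicalSpace Q] [TopologicalSpace α]
  {F : P → α → E}

theorem comp [Zero E] (hF : HasLocallyUniformCompactSupport F) {f : Q → P} (hf : Continuous f) :
    HasLocallyUniformCompactSupport fun q => F (f q) := fun q₀ =>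
  let ⟨K, hK, hFK⟩ := hF (f q₀)
  ⟨K, hK, hf.continuousAt.eventually hFK⟩

theorem mul_left [MulZeroClass E] (hF : HasLocallyUniformCompactSupport F) (a : P → α → E) :
    HasLocallyUniformCompactSupport fun p ξ => a p ξ * F p ξ := fun p₀ =>
  let ⟨K, hK, hFK⟩ := hF p₀
  ⟨K, hK, hFK.mono fun p hp ξ hξ => by simp only [hp ξ hξ, mul_zero]⟩

theorem hasCompactSupport [Zero E] [R1Space α] (hF : HasLocallyUniformCompactSupport F) (p : P) :
    HasCompactSupport (F p) :=
  let ⟨_, hK, hFK⟩ := hF p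
  HasCompactSupport.intro hK hFK.self_of_nhds

end HasLocallyUniformCompactSupport

theorem HasCompactSupport.integral_deriv_eq_zero {f : ℝ → ℝ} (hf : ContDiff ℝ 1 f)
    (hfs : HasCompactSupport f) : ∫ x, deriv f x = 0 := by
  have hf' : Integrable (deriv f) :=
    (hf.continuous_deriv le_rfl).integrable_of_hasCompactSupport hfs.deriv
  rw [← intervalIntegral.integral_Iic_add_Ioi (b := 0) hf'.integrableOn hf'.integrableOn,
    hfs.integral_Iic_deriv_eq hf, hfs.integral_Ioi_deriv_eq hf, add_neg_cancel]

theorem HasCompactSupport.integral_mul_deriv_eq_neg {f : ℝ → ℝ} (hf : ContDiff ℝ 1 f)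
    (hfs : HasCompactSupport f) : ∫ x, x * deriv f x = -∫ x, f x := by
  have hf' := hf.continuous_deriv le_rfl
  simpa using integral_mul_deriv_eq_deriv_mul_of_integrable (u := id) (u' := fun _ => 1)
    (fun x _ => hasDerivAt_id x)
    (fun x _ => (hf.differentiable one_ne_zero x).hasDerivAt)
    ((continuous_id.mul hf').integrable_of_hasCompactSupport hfs.deriv.mul_left)
    (hf.continuous.integrable_of_hasCompactSupport hfs |>.const_mul 1)
    ((continuous_id.mul hf.continuous).integrable_of_hasCompactSupport hfs.mul_left)

theorem ContDiff.continuous_deriv_fst {F : ℝ → ℝ → ℝ}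
    (hF : ContDiff ℝ 1 fun q : ℝ × ℝ => F q.1 q.2) :
    Continuous fun q : ℝ × ℝ => deriv (fun s => F s q.2) q.1 := by
  have hslice : ∀ s ξ, HasDerivAt (fun s => F s ξ)
      (fderiv ℝ (fun q : ℝ × ℝ => F q.1 q.2) (s, ξ) (1, 0)) s := fun s ξ =>
    (hF.differentiable one_ne_zero (s, ξ)).hasFDerivAt.comp_hasDerivAt (f := fun s => (s, ξ)) s
      ((hasDerivAt_id s).prodMk (hasDerivAt_const s ξ))
  simpa only [fun q : ℝ × ℝ => (hslice q.1 q.2).deriv] using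
    (hF.continuous_fderiv one_ne_zero).clm_apply continuous_const

theorem HasLocallyUniformCompactSupport.hasDerivAt_integral {F : ℝ → ℝ → ℝ}
    (hF : ContDiff ℝ 1 fun q : ℝ × ℝ => F q.1 q.2) (hFs : HasLocallyUniformCompactSupport F)
    (s₀ : ℝ) :
    Integrable (fun ξ => deriv (fun s => F s ξ) s₀) ∧
      HasDerivAt (fun s => ∫ ξ, F s ξ) (∫ ξ, deriv (fun s => F s ξ) s₀) s₀ := by
  obtain ⟨K, hK, hFK⟩ := hFs s₀
  obtain ⟨ε, hε, hball⟩ := eventually_nhds_iff_ball.1 hFK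
  have hcont : Continuous fun q : ℝ × ℝ => F q.1 q.2 := hF.continuous
  have hcont' := hF.continuous_deriv_fst
  have hdiff : ∀ s ξ, HasDerivAt (fun s => F s ξ) (deriv (fun s => F s ξ) s) s := fun s ξ =>
    ((hF.differentiable one_ne_zero).comp (differentiable_id.prodMk (differentiable_const ξ))
      s).hasDerivAt
  have hzero : ∀ s ∈ ball s₀ ε, ∀ ξ ∉ K, deriv (fun s => F s ξ) s = 0 := fun s hs ξ hξ => by
    have hloc : (fun s => F s ξ) =ᶠ[𝓝 s] fun _ => 0 :=
      eventually_of_mem (isOpen_ball.mem_nhds hs) fun s' hs' => hball s' hs' ξ hξ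
    rw [hloc.deriv_eq, deriv_const]
  obtain ⟨C, hC⟩ := ((isCompact_closedBall s₀ ε).prod hK).exists_bound_of_continuousOn
    hcont'.continuousOn
  have hbound : ∀ ξ, ∀ s ∈ ball s₀ ε, ‖deriv (fun s => F s ξ) s‖ ≤ K.indicator (fun _ => C) ξ := by
    intro ξ s hs
    by_cases hξ : ξ ∈ K
    · rw [Set.indicator_of_mem hξ]
      exact hC (s, ξ) ⟨ball_subset_closedBall hs, hξ⟩
    · rw [Set.indicator_of_notMem hξ, hzero s hs ξ hξ, norm_zero]
  exact hasDerivAt_integral_of_dominated_loc_of_deriv_le (ball_mem_nhds s₀ hε)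
    (Eventually.of_forall fun s => (hcont.comp (Continuous.prodMk_right s)).aestronglyMeasurable)
    ((hcont.comp (Continuous.prodMk_right s₀)).integrable_of_hasCompactSupport
      (hFs.hasCompactSupport s₀))
    (hcont'.comp (Continuous.prodMk_right s₀)).aestronglyMeasurable
    (Eventually.of_forall hbound)
    ((integrable_indicator_iff hK.measurableSet).2 (integrableOn_const hK.measure_lt_top.ne))
    (Eventually.of_forall fun ξ s _ => hdiff s ξ)

theorem HasLocallyUniformCompactSupport.hasDerivAt_integral_pow_mul {F : ℝ → ℝ → ℝ}
    (hF : ContDiff ℝ 1 fun q : ℝ × ℝ => F q.1 q.2) (hFs : HasLocallyUniformCompactSupport F)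
    (k : ℕ) (s₀ : ℝ) :
    Integrable (fun ξ => ξ ^ k * deriv (fun s => F s ξ) s₀) ∧
      HasDerivAt (fun s => ∫ ξ, ξ ^ k * F s ξ) (∫ ξ, ξ ^ k * deriv (fun s => F s ξ) s₀) s₀ := by
  simpa only [deriv_const_mul_field'] using
    (hFs.mul_left fun _ ξ => ξ ^ k).hasDerivAt_integral
      ((contDiff_snd.pow k).mul hF) s₀

theorem integral_mul_eq_zero_of_even {χ : ℝ → ℝ} (hχ : ∀ w, χ (-w) = χ w) :
    ∫ w, w * χ w = 0 := by
  have h := integral_neg_eq_self (fun w => w * χ w) volume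
  simp only [hχ, neg_mul, integral_neg] at h
  linarith

theorem integral_eq_mul_integral_comp_add_mul (G : ℝ → ℝ) {c : ℝ} (hc : 0 < c) (u : ℝ) :
    ∫ ξ, G ξ = c * ∫ w, G (u + c * w) := by
  rw [Measure.integral_comp_mul_left (fun y => G (u + y)), integral_add_left_eq_self,
    smul_eq_mul, abs_inv, abs_of_pos hc, mul_inv_cancel_left₀ hc.ne']

noncomputable def gibbsEquilibrium (χ : ℝ → ℝ) (ρ u c ξ : ℝ) : ℝ := ρ / c * χ ((ξ - u) / c)

theorem integral_pow_mul_gibbsEquilibrium (χ : ℝ → ℝ) (ρ u : ℝ) {c : ℝ} (hc : 0 < c) (k : ℕ) :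
    ∫ ξ, ξ ^ k * gibbsEquilibrium χ ρ u c ξ = ρ * ∫ w, (u + c * w) ^ k * χ w := by
  rw [integral_eq_mul_integral_comp_add_mul _ hc u, ← integral_const_mul, ← integral_const_mul]
  congr 1 with w
  rw [gibbsEquilibrium, add_sub_cancel_left, mul_div_cancel_left₀ _ hc.ne']
  field_simp

section GibbsEquilibrium

variable {χ : ℝ → ℝ}

theorem integral_gibbsEquilibrium (h0 : ∫ w, χ w = 1) (ρ u : ℝ) {c : ℝ} (hc : 0 < c) :
    ∫ ξ, gibbsEquilibrium χ ρ u c ξ = ρ := by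
  simpa [h0] using integral_pow_mul_gibbsEquilibrium χ ρ u hc 0

variable (hχ : Continuous χ) (hχs : HasCompactSupport χ)
include hχ hχs

theorem integral_mul_gibbsEquilibrium (h0 : ∫ w, χ w = 1) (h1 : ∫ w, w * χ w = 0)
    (ρ u : ℝ) {c : ℝ} (hc : 0 < c) :
    ∫ ξ, ξ * gibbsEquilibrium χ ρ u c ξ = ρ * u := by
  have hi0 : Integrable χ := hχ.integrable_of_hasCompactSupport hχs
  have hi1 : Integrable fun w => w * χ w :=
    (continuous_id.mul hχ).integrable_of_hasCompactSupport hχs.mul_left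
  simpa [add_mul, mul_assoc, integral_add (hi0.const_mul u) (hi1.const_mul c),
    integral_const_mul, h0, h1] using integral_pow_mul_gibbsEquilibrium χ ρ u hc 1

theorem integral_sq_mul_gibbsEquilibrium (h0 : ∫ w, χ w = 1) (h1 : ∫ w, w * χ w = 0)
    (h2 : ∫ w, w ^ 2 * χ w = 1) (ρ u : ℝ) {c : ℝ} (hc : 0 < c) :
    ∫ ξ, ξ ^ 2 * gibbsEquilibrium χ ρ u c ξ = ρ * (u ^ 2 + c ^ 2) := by
  have hi : ∀ k : ℕ, Integrable fun w => w ^ k * χ w := fun k =>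
    ((continuous_pow k).mul hχ).integrable_of_hasCompactSupport hχs.mul_left
  have hexpand : ∀ w, (u + c * w) ^ 2 * χ w
      = u ^ 2 * (w ^ 0 * χ w) + 2 * u * c * (w ^ 1 * χ w) + c ^ 2 * (w ^ 2 * χ w) := by
    intro w
    ring
  rw [integral_pow_mul_gibbsEquilibrium χ ρ u hc 2]
  simp_rw [hexpand]
  rw [integral_add, integral_add, integral_const_mul, integral_const_mul, integral_const_mul]
  · simp [h0, h1, h2]
  all_goals fun_prop

end GibbsEquilibrium

theorem ContDiff.gibbsEquilibrium {P : Type*} [NormedAddCommGroup P] [NormedSpace ℝ P]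
    {n : WithTop ℕ∞} {χ : ℝ → ℝ} (hχ : ContDiff ℝ n χ) {ρ u c : P → ℝ} (hρ : ContDiff ℝ n ρ)
    (hu : ContDiff ℝ n u) (hc : ContDiff ℝ n c) (hc0 : ∀ p, c p ≠ 0) :
    ContDiff ℝ n fun q : P × ℝ => gibbsEquilibrium χ (ρ q.1) (u q.1) (c q.1) q.2 :=
  ((hρ.comp contDiff_fst).div (hc.comp contDiff_fst) fun _ => hc0 _).mul
    (hχ.comp (((contDiff_snd.sub (hu.comp contDiff_fst)).div (hc.comp contDiff_fst))
      fun _ => hc0 _))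

theorem hasLocallyUniformCompactSupport_gibbsEquilibrium {P : Type*} [TopologicalSpace P]
    [WeaklyLocallyCompactSpace P] {χ : ℝ → ℝ} (hχ : HasCompactSupport χ) (ρ : P → ℝ)
    {u c : P → ℝ} (hu : Continuous u) (hc : Continuous c) (hc0 : ∀ p, c p ≠ 0) :
    HasLocallyUniformCompactSupport fun p => gibbsEquilibrium χ (ρ p) (u p) (c p) := by
  intro p₀
  obtain ⟨S, hS, hSp₀⟩ := exists_compact_mem_nhds p₀
  refine ⟨(fun q : P × ℝ => u q.1 + c q.1 * q.2) '' (S ×ˢ tsupport χ),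
    (hS.prod hχ).image (by fun_prop), ?_⟩
  filter_upwards [hSp₀] with p hp ξ hξ
  rw [gibbsEquilibrium, image_eq_zero_of_notMem_tsupport (f := χ), mul_zero]
  intro hmem
  exact hξ ⟨(p, (ξ - u p) / c p), ⟨hp, hmem⟩, by simp [mul_div_cancel₀ _ (hc0 p)]⟩

section KineticTransport

variable {M : ℝ → ℝ → ℝ → ℝ} (hM : ContDiff ℝ 1 fun q : (ℝ × ℝ) × ℝ => M q.1.1 q.1.2 q.2)
  (hMs : HasLocallyUniformCompactSupport fun p : ℝ × ℝ => M p.1 p.2)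
include hM hMs

theorem hasDerivAt_integral_pow_mul_time (k : ℕ) (x t : ℝ) :
    Integrable (fun ξ => ξ ^ k * deriv (fun τ => M x τ ξ) t) ∧
      HasDerivAt (fun τ => ∫ ξ, ξ ^ k * M x τ ξ)
        (∫ ξ, ξ ^ k * deriv (fun τ => M x τ ξ) t) t :=
  (hMs.comp (f := fun τ => (x, τ)) (by fun_prop)).hasDerivAt_integral_pow_mul
    (hM.comp (by fun_prop : ContDiff ℝ 1 fun q : ℝ × ℝ => ((x, q.1), q.2))) k t

theorem hasDerivAt_integral_pow_mul_space (k : ℕ) (x t : ℝ) :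
    Integrable (fun ξ => ξ ^ k * deriv (fun y => M y t ξ) x) ∧
      HasDerivAt (fun y => ∫ ξ, ξ ^ k * M y t ξ)
        (∫ ξ, ξ ^ k * deriv (fun y => M y t ξ) x) x :=
  (hMs.comp (f := fun y => (y, t)) (by fun_prop)).hasDerivAt_integral_pow_mul
    (hM.comp (by fun_prop : ContDiff ℝ 1 fun q : ℝ × ℝ => ((q.1, t), q.2))) k x

theorem integral_transport (x t a : ℝ) :
    ∫ ξ, (deriv (fun τ => M x τ ξ) t + ξ * deriv (fun y => M y t ξ) x
        - a * deriv (fun ζ => M x t ζ) ξ)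
      = deriv (fun τ => ∫ ξ, M x τ ξ) t + deriv (fun y => ∫ ξ, ξ * M y t ξ) x := by
  obtain ⟨hit, hdt⟩ := by simpa using hasDerivAt_integral_pow_mul_time hM hMs 0 x t
  obtain ⟨hix, hdx⟩ := by simpa using hasDerivAt_integral_pow_mul_space hM hMs 1 x t
  have hC1 : ContDiff ℝ 1 (M x t) := hM.comp (by fun_prop : ContDiff ℝ 1 fun ζ => ((x, t), ζ))
  have hCs : HasCompactSupport (M x t) := hMs.hasCompactSupport (x, t)
  have hiξ : Integrable (deriv (M x t)) :=
    (hC1.continuous_deriv le_rfl).integrable_of_hasCompactSupport hCs.deriv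
  rw [integral_sub ?_ (hiξ.const_mul a), integral_add hit hix, integral_const_mul,
    hCs.integral_deriv_eq_zero hC1, hdt.deriv, hdx.deriv, mul_zero, sub_zero]
  exact hit.add hix

theorem integral_mul_transport (x t a : ℝ) :
    ∫ ξ, ξ * (deriv (fun τ => M x τ ξ) t + ξ * deriv (fun y => M y t ξ) x
        - a * deriv (fun ζ => M x t ζ) ξ)
      = deriv (fun τ => ∫ ξ, ξ * M x τ ξ) t + deriv (fun y => ∫ ξ, ξ ^ 2 * M y t ξ) x
        + (∫ ξ, M x t ξ) * a := by
  obtain ⟨hit, hdt⟩ := by simpa using hasDerivAt_integral_pow_mul_time hM hMs 1 x t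
  obtain ⟨hix, hdx⟩ := hasDerivAt_integral_pow_mul_space hM hMs 2 x t
  have hC1 : ContDiff ℝ 1 (M x t) := hM.comp (by fun_prop : ContDiff ℝ 1 fun ζ => ((x, t), ζ))
  have hCs : HasCompactSupport (M x t) := hMs.hasCompactSupport (x, t)
  have hiξ : Integrable fun ξ => ξ * deriv (M x t) ξ :=
    (continuous_id.mul (hC1.continuous_deriv le_rfl)).integrable_of_hasCompactSupport
      hCs.deriv.mul_left
  have hexpand : ∀ ξ, ξ * (deriv (fun τ => M x τ ξ) t + ξ * deriv (fun y => M y t ξ) x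
      - a * deriv (fun ζ => M x t ζ) ξ) = ξ * deriv (fun τ => M x τ ξ) t
        + ξ ^ 2 * deriv (fun y => M y t ξ) x - a * (ξ * deriv (M x t) ξ) := fun ξ => by ring
  rw [integral_congr_ae (Eventually.of_forall hexpand), integral_sub ?_ (hiξ.const_mul a),
    integral_add hit hix, integral_const_mul, hCs.integral_mul_deriv_eq_neg hC1, hdt.deriv,
    hdx.deriv]
  · ring
  · exact hit.add hix

end KineticTransport

theorem gibbs_equilibrium_transport_moments_general
    (g l : ℝ) (hg : 0 < g)
    (χ : ℝ → ℝ) (hχ : ContDiff ℝ 1 χ) (hχsupp : HasCompactSupport χ)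
    (hχeven : ∀ w, χ (-w) = χ w)
    (hχ0 : (∫ w, χ w) = 1) (hχ2 : (∫ w, w ^ 2 * χ w) = 1)
    (H u Φ : ℝ → ℝ → ℝ)
    (hH : ContDiff ℝ 1 fun p : ℝ × ℝ => H p.1 p.2)
    (hu : ContDiff ℝ 1 fun p : ℝ × ℝ => u p.1 p.2)
    (hHpos : ∀ x t, 0 < H x t)
    (M : ℝ → ℝ → ℝ → ℝ)
    (hM : ∀ x t ξ, M x t ξ =
      l * H x t / Real.sqrt (g * H x t / 2)
        * χ ((ξ - u x t) / Real.sqrt (g * H x t / 2))) :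
    ∀ x t,
      (∫ ξ, (deriv (fun τ => M x τ ξ) t + ξ * deriv (fun y => M y t ξ) x
          - deriv (fun y => Φ y t) x * deriv (fun ζ => M x t ζ) ξ))
        = deriv (fun τ => l * H x τ) t + deriv (fun y => l * H y t * u y t) x ∧
      (∫ ξ, ξ * (deriv (fun τ => M x τ ξ) t + ξ * deriv (fun y => M y t ξ) x
          - deriv (fun y => Φ y t) x * deriv (fun ζ => M x t ζ) ξ))
        = deriv (fun τ => l * H x τ * u x τ) t
          + deriv (fun y => l * H y t * (u y t) ^ 2 + g * l * (H y t) ^ 2 / 2) x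
          + l * H x t * deriv (fun y => Φ y t) x := by
  have hpos : ∀ x t, 0 < g * H x t / 2 := fun x t => by have := hHpos x t; positivity
  have hc : ∀ x t, 0 < √(g * H x t / 2) := fun x t => Real.sqrt_pos.2 (hpos x t)
  have hcC1 : ContDiff ℝ 1 fun p : ℝ × ℝ => √(g * H p.1 p.2 / 2) :=
    ((contDiff_const.mul hH).div_const 2).sqrt fun p => (hpos p.1 p.2).ne'
  have hMeq : M = fun x t => gibbsEquilibrium χ (l * H x t) (u x t) √(g * H x t / 2) :=
    funext fun x => funext fun t => funext (hM x t)
  have hMC1 : ContDiff ℝ 1 fun q : (ℝ × ℝ) × ℝ => M q.1.1 q.1.2 q.2 := by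
    rw [hMeq]
    exact hχ.gibbsEquilibrium (contDiff_const.mul hH) hu hcC1 fun p => (hc p.1 p.2).ne'
  have hMs : HasLocallyUniformCompactSupport fun p : ℝ × ℝ => M p.1 p.2 := by
    rw [hMeq]
    exact hasLocallyUniformCompactSupport_gibbsEquilibrium hχsupp _ hu.continuous
      hcC1.continuous fun p => (hc p.1 p.2).ne'
  have hχ1 := integral_mul_eq_zero_of_even hχeven
  have mass : ∀ x t, ∫ ξ, M x t ξ = l * H x t := fun x t => by
    simp only [hMeq, integral_gibbsEquilibrium hχ0 _ _ (hc x t)]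
  have momentum : ∀ x t, ∫ ξ, ξ * M x t ξ = l * H x t * u x t := fun x t => by
    simp only [hMeq, integral_mul_gibbsEquilibrium hχ.continuous hχsupp hχ0 hχ1 _ _ (hc x t)]
  have energy : ∀ x t, ∫ ξ, ξ ^ 2 * M x t ξ = l * H x t * u x t ^ 2 + g * l * H x t ^ 2 / 2 :=
    fun x t => by
      simp only [hMeq, integral_sq_mul_gibbsEquilibrium hχ.continuous hχsupp hχ0 hχ1 hχ2 _ _
        (hc x t), Real.sq_sqrt (hpos x t).le]
      ring
  intro x t
  simp only [integral_transport hMC1 hMs, integral_mul_transport hMC1 hMs, mass, momentum,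
    energy, and_self]

/-- Moments of the kinetic transport operator applied to the Gibbs equilibrium
`M(x,t,ξ) = (lH/c)·χ((ξ−u)/c)`, `c = √(gH/2)`, recover the mass and momentum
fluxes of the shallow water system with potential `Φ` (playing the role of
`pᵃ + g z_b`). -/
theorem gibbs_equilibrium_transport_moments
    (g l : ℝ) (hg : 0 < g) (hl : 0 < l)
    (χ : ℝ → ℝ) (hχ : ContDiff ℝ 1 χ) (hχsupp : HasCompactSupport χ)
    (hχeven : ∀ w, χ (-w) = χ w) (hχpos : ∀ w, 0 ≤ χ w)
    (hχ0 : (∫ w, χ w) = 1) (hχ2 : (∫ w, w ^ 2 * χ w) = 1)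
    (H u Φ : ℝ → ℝ → ℝ)
    (hH : ContDiff ℝ 1 fun p : ℝ × ℝ => H p.1 p.2)
    (hu : ContDiff ℝ 1 fun p : ℝ × ℝ => u p.1 p.2)
    (hΦ : ContDiff ℝ 1 fun p : ℝ × ℝ => Φ p.1 p.2)
    (hHpos : ∀ x t, 0 < H x t)
    (M : ℝ → ℝ → ℝ → ℝ)
    (hM : ∀ x t ξ, M x t ξ =
      l * H x t / Real.sqrt (g * H x t / 2)
        * χ ((ξ - u x t) / Real.sqrt (g * H x t / 2))) :
    ∀ x t,
      (∫ ξ, (deriv (fun τ => M x τ ξ) t + ξ * deriv (fun y => M y t ξ) x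
          - deriv (fun y => Φ y t) x * deriv (fun ζ => M x t ζ) ξ))
        = deriv (fun τ => l * H x τ) t + deriv (fun y => l * H y t * u y t) x ∧
      (∫ ξ, ξ * (deriv (fun τ => M x τ ξ) t + ξ * deriv (fun y => M y t ξ) x
          - deriv (fun y => Φ y t) x * deriv (fun ζ => M x t ζ) ξ))
        = deriv (fun τ => l * H x τ * u x τ) t
          + deriv (fun y => l * H y t * (u y t) ^ 2 + g * l * (H y t) ^ 2 / 2) x
          + l * H x t * deriv (fun y => Φ y t) x :=
  gibbs_equilibrium_transport_moments_general g l hg χ hχ hχsupp hχeven hχ0 hχ2 H u Φ hH hu hHpos M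
    hM
end

section
/- Let u, w : ℝ³→ℝ be C¹ functions of (x,z,t), let a, b : ℝ²→ℝ be C¹ with a(x,t) < b(x,t), and let η : ℝ²→ℝ be C¹. Suppose that on the layer a(x,t) ≤ z ≤ b(x,t) the hydrostatic Euler momentum equation ∂ₜu + ∂ₓ(u²) + ∂_z(uw) + ∂ₓp = 0 holds with hydrostatic pressure p(x,z,t) = g(η(x,t) − z). Define h = b − a and the interface exchange terms G_b = ∂ₜb + u(x,b,t)∂ₓb − w(x,b,t) and G_a = ∂ₜa + u(x,a,t)∂ₓa − w(x,a,t). Then ∂ₜ∫_a^b u dz + ∂ₓ∫_a^b u² dz + g h ∂ₓη = u(x,b(x,t),t)·G_b − u(x,a(x,t),t)·G_a for all (x,t). -/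
/-!
Differentiating the layer integrals by the Leibniz rule with moving endpoints produces the
integrals of `∂ₜu` and `∂ₓ(u²)` over the layer plus the boundary terms `u b_t`, `u² b_x` at
`z = b` (and the opposite ones at `z = a`). The vertical flux integrates exactly to `uw` at the
two interfaces, and the hydrostatic pressure gradient `g ∂ₓη` does not depend on `z`, so it
integrates to `g h ∂ₓη`. Integrating the momentum equation over the layer and collecting the
interface terms gives the balance.

The Leibniz rule itself comes from the strict differentiability of
`(y, s) ↦ ∫ z in c..y, f z s`, whose two partial derivatives `f y s` and
`∫ z in c..y, ∂ₛf z s` are continuous.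
-/

open MeasureTheory intervalIntegral Filter Set Function

section Leibniz

variable {E : Type*} [NormedAddCommGroup E] [NormedSpace ℝ E] {f : ℝ → ℝ → E}

theorem ContDiff.differentiableAt_uncurry_left (hf : ContDiff ℝ 1 (uncurry f)) (z s : ℝ) :
    DifferentiableAt ℝ (f z) s :=
  DifferentiableAt.comp (g := uncurry f) (f := fun σ => (z, σ)) s
    (hf.differentiable one_ne_zero (z, s)) ((differentiableAt_const z).prodMk differentiableAt_id)

theorem ContDiff.differentiableAt_uncurry_right (hf : ContDiff ℝ 1 (uncurry f)) (z s : ℝ) :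
    DifferentiableAt ℝ (fun y => f y s) z :=
  DifferentiableAt.comp (g := uncurry f) (f := fun y => (y, s)) z
    (hf.differentiable one_ne_zero (z, s)) (differentiableAt_id.prodMk (differentiableAt_const s))

theorem ContDiff.continuous_deriv_uncurry_left (hf : ContDiff ℝ 1 (uncurry f)) :
    Continuous fun p : ℝ × ℝ => deriv (f p.1) p.2 := by
  have h (p : ℝ × ℝ) : deriv (f p.1) p.2 = fderiv ℝ (uncurry f) p (0, 1) :=
    (HasFDerivAt.comp_hasDerivAt (l := uncurry f) (f := fun σ => (p.1, σ)) p.2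
      (hf.differentiable one_ne_zero p).hasFDerivAt
      ((hasDerivAt_const p.2 p.1).prodMk (hasDerivAt_id p.2))).deriv
  simp only [h]
  exact (hf.continuous_fderiv one_ne_zero).clm_apply continuous_const

theorem hasDerivAt_intervalIntegral_of_contDiff (hf : ContDiff ℝ 1 (uncurry f)) (c d s : ℝ) :
    HasDerivAt (fun s => ∫ z in c..d, f z s) (∫ z in c..d, deriv (f z) s) s := by
  have hK : IsCompact (uIcc c d ×ˢ Metric.closedBall s 1) :=
    isCompact_uIcc.prod (isCompact_closedBall s 1)
  obtain ⟨M, hM⟩ := hK.exists_bound_of_continuousOn hf.continuous_deriv_uncurry_left.continuousOn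
  exact (hasDerivAt_integral_of_dominated_loc_of_deriv_le (bound := fun _ => M)
    (Metric.closedBall_mem_nhds s one_pos)
    (Eventually.of_forall fun σ => (hf.continuous.uncurry_right σ).aestronglyMeasurable)
    ((hf.continuous.uncurry_right s).intervalIntegrable c d)
    (hf.continuous_deriv_uncurry_left.uncurry_right s).aestronglyMeasurable
    (Eventually.of_forall fun z hz σ hσ => hM (z, σ) ⟨uIoc_subset_uIcc hz, hσ⟩)
    intervalIntegrable_const
    (Eventually.of_forall fun z _ σ _ => (hf.differentiableAt_uncurry_left z σ).hasDerivAt)).2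

variable [CompleteSpace E]

theorem hasStrictFDerivAt_primitive_of_contDiff (hf : ContDiff ℝ 1 (uncurry f)) (c : ℝ)
    (p : ℝ × ℝ) :
    HasStrictFDerivAt (fun q : ℝ × ℝ => ∫ z in c..q.1, f z q.2)
      ((ContinuousLinearMap.toSpanSingleton ℝ (f p.1 p.2)).coprod
        (ContinuousLinearMap.toSpanSingleton ℝ (∫ z in c..p.1, deriv (f z) p.2))) p := by
  have hprim : Continuous fun q : ℝ × ℝ => ∫ z in c..q.1, deriv (f z) q.2 :=
    (continuous_parametric_primitive_of_continuous (μ := volume) (a₀ := c)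
      (f := fun s z => deriv (f z) s) (hf.continuous_deriv_uncurry_left.comp continuous_swap)).comp
      continuous_swap
  refine hasStrictFDerivAt_uncurry_coprod (f := fun y s => ∫ z in c..y, f z s)
    (f₁ := fun y s => ContinuousLinearMap.toSpanSingleton ℝ (f y s))
    (f₂ := fun y s => ContinuousLinearMap.toSpanSingleton ℝ (∫ z in c..y, deriv (f z) s))
    (Eventually.of_forall fun q =>
      ((hf.continuous.uncurry_right q.2).integral_hasStrictDerivAt c q.1).hasDerivAt.hasFDerivAt)
    (Eventually.of_forall fun q => (hasDerivAt_intervalIntegral_of_contDiff hf c q.1 q.2).hasFDerivAt)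
    ?_ ?_
  · exact (ContinuousLinearMap.toSpanSingletonCLE.continuous.comp hf.continuous).continuousAt
  · exact (ContinuousLinearMap.toSpanSingletonCLE.continuous.comp hprim).continuousAt

theorem hasDerivAt_intervalIntegral_upper_of_contDiff (hf : ContDiff ℝ 1 (uncurry f)) (c : ℝ)
    {φ : ℝ → ℝ} {φ' s : ℝ} (hφ : HasDerivAt φ φ' s) :
    HasDerivAt (fun s => ∫ z in c..φ s, f z s)
      (φ' • f (φ s) s + ∫ z in c..φ s, deriv (f z) s) s := by
  have h := HasFDerivAt.comp_hasDerivAt (f := fun σ => (φ σ, σ)) s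
    (hasStrictFDerivAt_primitive_of_contDiff hf c (φ s, s)).hasFDerivAt
    (hφ.prodMk (hasDerivAt_id s))
  exact h.congr_deriv (by simp)

theorem hasDerivAt_intervalIntegral_leibniz (hf : ContDiff ℝ 1 (uncurry f))
    {α β : ℝ → ℝ} {α' β' s : ℝ} (hα : HasDerivAt α α' s) (hβ : HasDerivAt β β' s) :
    HasDerivAt (fun s => ∫ z in α s..β s, f z s)
      (β' • f (β s) s - α' • f (α s) s + ∫ z in α s..β s, deriv (f z) s) s := by
  have hsplit (σ : ℝ) : ∫ z in α σ..β σ, f z σ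
      = (∫ z in 0..β σ, f z σ) - ∫ z in 0..α σ, f z σ :=
    (integral_interval_sub_left ((hf.continuous.uncurry_right σ).intervalIntegrable _ _)
      ((hf.continuous.uncurry_right σ).intervalIntegrable _ _)).symm
  have hD : Continuous fun z => deriv (f z) s := hf.continuous_deriv_uncurry_left.uncurry_right s
  rw [funext hsplit, ← integral_interval_sub_left (hD.intervalIntegrable 0 _)
    (hD.intervalIntegrable 0 _)]
  exact ((hasDerivAt_intervalIntegral_upper_of_contDiff hf 0 hβ).sub
    (hasDerivAt_intervalIntegral_upper_of_contDiff hf 0 hα)).congr_deriv (by abel)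

end Leibniz

theorem integral_add_add_add_const_eq_zero {F₁ F₂ F₃ : ℝ → ℝ} {c a b : ℝ} (hab : a ≤ b)
    (h₁ : IntervalIntegrable F₁ volume a b) (h₂ : IntervalIntegrable F₂ volume a b)
    (h₃ : IntervalIntegrable F₃ volume a b) (h : ∀ z ∈ Icc a b, F₁ z + F₂ z + F₃ z + c = 0) :
    (∫ z in a..b, F₁ z) + (∫ z in a..b, F₂ z) + (∫ z in a..b, F₃ z) + (b - a) * c = 0 := by
  have hzero : ∫ z in a..b, (F₁ z + F₂ z + F₃ z + c) = 0 := by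
    rw [integral_congr (g := fun _ => 0) fun z hz => h z (uIcc_of_le hab ▸ hz),
      intervalIntegral.integral_zero]
  rwa [integral_add ((h₁.add h₂).add h₃) intervalIntegrable_const, integral_add (h₁.add h₂) h₃,
    integral_add h₁ h₂, intervalIntegral.integral_const, smul_eq_mul] at hzero

theorem layer_momentum_balance_general
    (g : ℝ)
    (u w : ℝ → ℝ → ℝ → ℝ)
    (hu : ContDiff ℝ 1 fun p : ℝ × ℝ × ℝ => u p.1 p.2.1 p.2.2)
    (hw : ContDiff ℝ 1 fun p : ℝ × ℝ × ℝ => w p.1 p.2.1 p.2.2)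
    (a b η : ℝ → ℝ → ℝ)
    (ha : ContDiff ℝ 1 fun p : ℝ × ℝ => a p.1 p.2)
    (hb : ContDiff ℝ 1 fun p : ℝ × ℝ => b p.1 p.2)
    (hab : ∀ x t, a x t < b x t)
    (hmom : ∀ x t z, a x t ≤ z → z ≤ b x t →
      deriv (fun τ => u x z τ) t + deriv (fun y => (u y z t) ^ 2) x
        + deriv (fun ζ => u x ζ t * w x ζ t) z
        + deriv (fun y => g * (η y t - z)) x = 0) :
    ∀ x t,
      deriv (fun τ => ∫ z in (a x τ)..(b x τ), u x z τ) t
        + deriv (fun y => ∫ z in (a y t)..(b y t), (u y z t) ^ 2) x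
        + g * (b x t - a x t) * deriv (fun y => η y t) x
      = u x (b x t) t *
          (deriv (fun τ => b x τ) t
            + u x (b x t) t * deriv (fun y => b y t) x - w x (b x t) t)
        - u x (a x t) t *
          (deriv (fun τ => a x τ) t
            + u x (a x t) t * deriv (fun y => a y t) x - w x (a x t) t) := by
  intro x t
  have hut : ContDiff ℝ 1 (uncurry fun z τ => u x z τ) :=
    hu.comp (contDiff_const.prodMk contDiff_id)
  have hux : ContDiff ℝ 1 (uncurry fun z y => u y z t ^ 2) :=
    (hu.comp (contDiff_snd.prodMk (contDiff_fst.prodMk contDiff_const))).pow 2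
  have huw : ContDiff ℝ 1 fun ζ => u x ζ t * w x ζ t :=
    (hu.comp (contDiff_const.prodMk (contDiff_id.prodMk contDiff_const))).mul
      (hw.comp (contDiff_const.prodMk (contDiff_id.prodMk contDiff_const)))
  have htime := hasDerivAt_intervalIntegral_leibniz hut
    (ha.differentiableAt_uncurry_left x t).hasDerivAt
    (hb.differentiableAt_uncurry_left x t).hasDerivAt
  have hspace := hasDerivAt_intervalIntegral_leibniz hux
    (ha.differentiableAt_uncurry_right x t).hasDerivAt
    (hb.differentiableAt_uncurry_right x t).hasDerivAt
  have hflux : ∫ z in a x t..b x t, deriv (fun ζ => u x ζ t * w x ζ t) z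
      = u x (b x t) t * w x (b x t) t - u x (a x t) t * w x (a x t) t :=
    integral_deriv_eq_sub (fun ζ _ => (huw.differentiable one_ne_zero).differentiableAt)
      ((huw.continuous_deriv le_rfl).intervalIntegrable _ _)
  have hpressure (z : ℝ) :
      deriv (fun y => g * (η y t - z)) x = g * deriv (fun y => η y t) x := by
    simp only [deriv_const_mul_field', deriv_sub_const]
  have hlayer := integral_add_add_add_const_eq_zero (hab x t).le
    ((hut.continuous_deriv_uncurry_left.uncurry_right t).intervalIntegrable _ _)
    ((hux.continuous_deriv_uncurry_left.uncurry_right x).intervalIntegrable _ _)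
    ((huw.continuous_deriv le_rfl).intervalIntegrable _ _)
    fun z hz => hpressure z ▸ hmom x t z hz.1 hz.2
  rw [htime.deriv, hspace.deriv]
  simp only [smul_eq_mul]
  linear_combination hlayer - hflux

/-- Layer-averaged momentum balance: integrating the hydrostatic Euler momentum
equation `∂ₜu + ∂ₓ(u²) + ∂_z(uw) + ∂ₓp = 0`, with `p = g(η − z)`, over a fluid
layer `a(x,t) ≤ z ≤ b(x,t)` gives the layer momentum equation with interface
exchange terms `G_a`, `G_b`. -/
theorem layer_momentum_balance
    (g : ℝ) (hg : 0 < g)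
    (u w : ℝ → ℝ → ℝ → ℝ)
    (hu : ContDiff ℝ 1 fun p : ℝ × ℝ × ℝ => u p.1 p.2.1 p.2.2)
    (hw : ContDiff ℝ 1 fun p : ℝ × ℝ × ℝ => w p.1 p.2.1 p.2.2)
    (a b η : ℝ → ℝ → ℝ)
    (ha : ContDiff ℝ 1 fun p : ℝ × ℝ => a p.1 p.2)
    (hb : ContDiff ℝ 1 fun p : ℝ × ℝ => b p.1 p.2)
    (hη : ContDiff ℝ 1 fun p : ℝ × ℝ => η p.1 p.2)
    (hab : ∀ x t, a x t < b x t)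
    (hmom : ∀ x t z, a x t ≤ z → z ≤ b x t →
      deriv (fun τ => u x z τ) t + deriv (fun y => (u y z t) ^ 2) x
        + deriv (fun ζ => u x ζ t * w x ζ t) z
        + deriv (fun y => g * (η y t - z)) x = 0) :
    ∀ x t,
      deriv (fun τ => ∫ z in (a x τ)..(b x τ), u x z τ) t
        + deriv (fun y => ∫ z in (a y t)..(b y t), (u y z t) ^ 2) x
        + g * (b x t - a x t) * deriv (fun y => η y t) x
      = u x (b x t) t *
          (deriv (fun τ => b x τ) t
            + u x (b x t) t * deriv (fun y => b y t) x - w x (b x t) t)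
        - u x (a x t) t *
          (deriv (fun τ => a x τ) t
            + u x (a x t) t * deriv (fun y => a y t) x - w x (a x t) t) :=
  layer_momentum_balance_general g u w hu hw a b η ha hb hab hmom
end

section
/- Fix N≥1, layer fractions l_α>0 with Σ_{α=1}^N l_α = 1, and g>0. Let H>0, u_1,…,u_N, z_b, p^a be C¹ functions of (x,t); set h_α = l_α H, η = H + z_b, define G_{α+1/2} = Σ_{j=1}^{α}(∂ₜh_j + ∂ₓ(h_j u_j)) for α=1,…,N−1 with G_{1/2} = G_{N+1/2} = 0, and let u_{α+1/2}(x,t), α=1,…,N−1, be arbitrary C⁰ interface velocity functions. Suppose the global continuity equation ∂ₜH + ∂ₓΣ_{α=1}^N h_α u_α = 0 and, for each α, the momentum equation ∂ₜ(h_α u_α) + ∂ₓ(h_α u_α² + (g/(2 l_α)) h_α²) = −h_α ∂ₓp^a − g h_α ∂ₓz_b + u_{α+1/2} G_{α+1/2} − u_{α−1/2} G_{α−1/2} hold. Then, with the layer energies E_α = h_α u_α²/2 + g h_α(η+z_b)/2 + h_α p^a, the energy balance ∂ₜΣ_{α=1}^N E_α + ∂ₓΣ_{α=1}^N u_α(E_α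 + (g/2) h_α H) = H∂ₜp^a + gH∂ₜz_b + Σ_{α=1}^{N−1} G_{α+1/2}·(u_{α+1/2} − (u_α+u_{α+1})/2)·(u_α − u_{α+1}) holds. -/
/-!
Multiply the momentum equation of layer `α` by `u_α` and subtract `(u_α² / 2 - p^a - g η)` times
its mass equation `∂ₜh_α + ∂ₓ(h_α u_α) = G_{α+1/2} - G_{α-1/2}`. By the Leibniz rule the left side
becomes `∂ₜE_α + ∂ₓ(u_α (E_α + g h_α H / 2))`, and what remains on the right is
`h_α (∂ₜp^a + g ∂ₜz_b)` plus exchange terms. Summing over the layers, `∑ l_α = 1` turns the first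
part into `H (∂ₜp^a + g ∂ₜz_b)`; the exchange terms multiplied by `p^a + g η` telescope, because
`G_{1/2} = 0` and `G_{N+1/2} = 0` (the latter is the global continuity equation); and summation
by parts turns the remaining ones into the interface terms.
-/

open Finset

theorem DifferentiableAt.partial_snd {𝕜 E F G : Type*} [NontriviallyNormedField 𝕜]
    [NormedAddCommGroup E] [NormedSpace 𝕜 E] [NormedAddCommGroup F] [NormedSpace 𝕜 F]
    [NormedAddCommGroup G] [NormedSpace 𝕜 G] {f : E → F → G} {x : E} {t : F}
    (hf : DifferentiableAt 𝕜 (fun p : E × F => f p.1 p.2) (x, t)) :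
    DifferentiableAt 𝕜 (fun τ => f x τ) t :=
  hf.comp t ((differentiableAt_const x).prodMk differentiableAt_id)

theorem DifferentiableAt.partial_fst {𝕜 E F G : Type*} [NontriviallyNormedField 𝕜]
    [NormedAddCommGroup E] [NormedSpace 𝕜 E] [NormedAddCommGroup F] [NormedSpace 𝕜 F]
    [NormedAddCommGroup G] [NormedSpace 𝕜 G] {f : E → F → G} {x : E} {t : F}
    (hf : DifferentiableAt 𝕜 (fun p : E × F => f p.1 p.2) (x, t)) :
    DifferentiableAt 𝕜 (fun y => f y t) x :=
  (hf.comp x (differentiableAt_id.prodMk (differentiableAt_const t)) :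
    DifferentiableAt 𝕜 ((fun p : E × F => f p.1 p.2) ∘ fun y => (y, t)) x)

theorem Fin.sum_filter_val_lt_succ {M : Type*} [AddCommMonoid M] {n : ℕ} (m : Fin n → M)
    (k : Fin n) :
    ∑ j ∈ univ.filter (fun j : Fin n => (j : ℕ) < k + 1), m j
      = ∑ j ∈ univ.filter (fun j : Fin n => (j : ℕ) < k), m j + m k := by
  have hfilter : univ.filter (fun j : Fin n => (j : ℕ) < k + 1)
      = insert k (univ.filter (fun j : Fin n => (j : ℕ) < k)) := by
    ext j
    simp [Fin.ext_iff, le_iff_eq_or_lt]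
  rw [hfilter, sum_insert (by simp), add_comm]

theorem sum_exchange_eq_sum_interfaces {K : Type*} [Field K] {N : ℕ} (Γ w : ℕ → K)
    (v : Fin (N + 1) → K) (h0 : Γ 0 = 0) (htop : Γ (N + 1) = 0) :
    ∑ α : Fin (N + 1),
      (v α * (w (α + 1) * Γ (α + 1) - w α * Γ α) - (Γ (α + 1) - Γ α) * (v α ^ 2 / 2))
    = ∑ β : Fin N,
        Γ (β + 1) * (w (β + 1) - (v β.castSucc + v β.succ) / 2) * (v β.castSucc - v β.succ) := by
  have hsplit : ∀ α : Fin (N + 1),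
      v α * (w (α + 1) * Γ (α + 1) - w α * Γ α) - (Γ (α + 1) - Γ α) * (v α ^ 2 / 2)
        = Γ (α + 1) * (v α * w (α + 1) - v α ^ 2 / 2) - Γ α * (v α * w α - v α ^ 2 / 2) :=
    fun α => by ring
  rw [sum_congr rfl fun α _ => hsplit α, sum_sub_distrib, Fin.sum_univ_castSucc,
    Fin.sum_univ_succ]
  simp only [Fin.val_last, htop, Fin.val_zero, h0, zero_mul, add_zero, zero_add,
    Fin.val_castSucc, Fin.val_succ]
  rw [← sum_sub_distrib]
  exact sum_congr rfl fun β _ => by ring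

section
variable {g l : ℝ} {H u p z : ℝ → ℝ} {s : ℝ}

theorem hasDerivAt_layer_energy (hH : DifferentiableAt ℝ H s) (hu : DifferentiableAt ℝ u s)
    (hp : DifferentiableAt ℝ p s) (hz : DifferentiableAt ℝ z s) :
    HasDerivAt (fun s => l * H s * u s ^ 2 / 2 + g * (l * H s) * ((H s + z s) + z s) / 2
        + l * H s * p s)
      (u s * deriv (fun s => l * H s * u s) s
        + (p s + g * (H s + z s) - u s ^ 2 / 2) * deriv (fun s => l * H s) s
        + l * H s * (deriv p s + g * deriv z s)) s := by
  have hlH := hH.hasDerivAt.const_mul l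
  refine ((((hlH.fun_mul (hu.hasDerivAt.fun_pow 2)).div_const 2).fun_add
      (((hlH.const_mul g).fun_mul ((hH.hasDerivAt.fun_add hz.hasDerivAt).fun_add
        hz.hasDerivAt)).div_const 2)).fun_add (hlH.fun_mul hp.hasDerivAt)).congr_deriv ?_
  rw [(hlH.fun_mul hu.hasDerivAt).deriv, hlH.deriv]
  ring

theorem hasDerivAt_layer_energy_flux (hl : l ≠ 0) (hH : DifferentiableAt ℝ H s)
    (hu : DifferentiableAt ℝ u s) (hp : DifferentiableAt ℝ p s) (hz : DifferentiableAt ℝ z s) :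
    HasDerivAt (fun s => u s * ((l * H s * u s ^ 2 / 2 + g * (l * H s) * ((H s + z s) + z s) / 2
        + l * H s * p s) + g / 2 * (l * H s) * H s))
      (u s * (deriv (fun s => l * H s * u s ^ 2 + g / (2 * l) * (l * H s) ^ 2) s
          + l * H s * deriv p s + g * (l * H s) * deriv z s)
        + (p s + g * (H s + z s) - u s ^ 2 / 2) * deriv (fun s => l * H s * u s) s) s := by
  have hlH := hH.hasDerivAt.const_mul l
  refine (hu.hasDerivAt.fun_mul (((((hlH.fun_mul (hu.hasDerivAt.fun_pow 2)).div_const 2).fun_add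
      (((hlH.const_mul g).fun_mul ((hH.hasDerivAt.fun_add hz.hasDerivAt).fun_add
        hz.hasDerivAt)).div_const 2)).fun_add (hlH.fun_mul hp.hasDerivAt)).fun_add
      ((hlH.const_mul (g / 2)).fun_mul hH.hasDerivAt))).congr_deriv ?_
  rw [((hlH.fun_mul (hu.hasDerivAt.fun_pow 2)).fun_add
      ((hlH.fun_pow 2).const_mul (g / (2 * l)))).deriv, (hlH.fun_mul hu.hasDerivAt).deriv]
  field_simp
  ring
end

theorem sum_layer_sources_eq {K : Type*} [Field K] {N : ℕ} (l : Fin (N + 1) → K)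
    (hl : ∑ α, l α = 1) (Γ w : ℕ → K) (v : Fin (N + 1) → K) (h0 : Γ 0 = 0)
    (htop : Γ (N + 1) = 0) (A B : K) :
    ∑ α : Fin (N + 1), (l α * A + (Γ (α + 1) - Γ α) * B
      + (v α * (w (α + 1) * Γ (α + 1) - w α * Γ α) - (Γ (α + 1) - Γ α) * (v α ^ 2 / 2)))
    = A + ∑ β : Fin N,
        Γ (β + 1) * (w (β + 1) - (v β.castSucc + v β.succ) / 2) * (v β.castSucc - v β.succ) := by
  have htel : ∑ α : Fin (N + 1), (Γ (α + 1) - Γ α) = 0 := by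
    rw [Fin.sum_univ_eq_sum_range (fun k => Γ (k + 1) - Γ k), sum_range_sub, htop, h0, sub_zero]
  rw [sum_add_distrib, sum_add_distrib, ← sum_mul, ← sum_mul, hl, htel,
    sum_exchange_eq_sum_interfaces Γ w v h0 htop, one_mul, zero_mul, add_zero]

theorem multilayer_energy_balance_general
    (N : ℕ) (g : ℝ)
    (l : Fin (N + 1) → ℝ) (hl : ∀ α, 0 < l α) (hlsum : ∑ α, l α = 1)
    (H pa zb : ℝ → ℝ → ℝ) (u : Fin (N + 1) → ℝ → ℝ → ℝ)
    (hH : ContDiff ℝ 1 fun p : ℝ × ℝ => H p.1 p.2)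
    (hu : ∀ α, ContDiff ℝ 1 fun p : ℝ × ℝ => u α p.1 p.2)
    (hpa : ContDiff ℝ 1 fun p : ℝ × ℝ => pa p.1 p.2)
    (hzb : ContDiff ℝ 1 fun p : ℝ × ℝ => zb p.1 p.2)
    (uhalf : ℕ → ℝ → ℝ → ℝ)
    (G : ℕ → ℝ → ℝ → ℝ)
    (hG : ∀ k x t, G k x t =
      ∑ j ∈ Finset.univ.filter (fun j : Fin (N + 1) => (j : ℕ) < k),
        (deriv (fun τ => l j * H x τ) t + deriv (fun y => l j * H y t * u j y t) x))
    (hcont : ∀ x t, deriv (fun τ => H x τ) t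
      + deriv (fun y => ∑ α, l α * H y t * u α y t) x = 0)
    (hmom : ∀ α : Fin (N + 1), ∀ x t,
      deriv (fun τ => l α * H x τ * u α x τ) t
        + deriv (fun y => l α * H y t * (u α y t) ^ 2
            + g / (2 * l α) * (l α * H y t) ^ 2) x
      = -(l α * H x t) * deriv (fun y => pa y t) x
        - g * (l α * H x t) * deriv (fun y => zb y t) x
        + uhalf ((α : ℕ) + 1) x t * G ((α : ℕ) + 1) x t
        - uhalf (α : ℕ) x t * G (α : ℕ) x t)
    (E : Fin (N + 1) → ℝ → ℝ → ℝ)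
    (hE : ∀ α y t, E α y t =
      l α * H y t * (u α y t) ^ 2 / 2
        + g * (l α * H y t) * ((H y t + zb y t) + zb y t) / 2
        + l α * H y t * pa y t) :
    ∀ x t,
      deriv (fun τ => ∑ α, E α x τ) t
        + deriv (fun y => ∑ α, u α y t * (E α y t + g / 2 * (l α * H y t) * H y t)) x
      = H x t * deriv (fun τ => pa x τ) t + g * H x t * deriv (fun τ => zb x τ) t
        + ∑ β : Fin N,
            G ((β : ℕ) + 1) x t
              * (uhalf ((β : ℕ) + 1) x t
                  - (u β.castSucc x t + u β.succ x t) / 2)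
              * (u β.castSucc x t - u β.succ x t) := by
  intro x t
  have hdt {f : ℝ → ℝ → ℝ} (hf : ContDiff ℝ 1 fun p : ℝ × ℝ => f p.1 p.2) :
      DifferentiableAt ℝ (fun τ => f x τ) t :=
    (hf.differentiable one_ne_zero _).partial_snd
  have hdx {f : ℝ → ℝ → ℝ} (hf : ContDiff ℝ 1 fun p : ℝ × ℝ => f p.1 p.2) :
      DifferentiableAt ℝ (fun y => f y t) x :=
    (hf.differentiable one_ne_zero _).partial_fst
  have hmass (α : Fin (N + 1)) : G (α + 1) x t - G α x t
      = deriv (fun τ => l α * H x τ) t + deriv (fun y => l α * H y t * u α y t) x := by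
    rw [hG, hG, Fin.sum_filter_val_lt_succ, add_sub_cancel_left]
  have hG0 : G 0 x t = 0 := by simp [hG]
  have hGtop : G (N + 1) x t = 0 := by
    rw [hG, ← hcont x t, filter_true_of_mem fun j _ => j.is_lt, sum_add_distrib,
      deriv_fun_sum fun α _ => ((hdx hH).const_mul _).fun_mul (hdx (hu α))]
    simp only [deriv_const_mul _ (hdt hH), ← sum_mul, hlsum, one_mul]
  simp only [hE]
  rw [(HasDerivAt.fun_sum fun α _ =>
      hasDerivAt_layer_energy (hdt hH) (hdt (hu α)) (hdt hpa) (hdt hzb)).deriv,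
    (HasDerivAt.fun_sum fun α _ =>
      hasDerivAt_layer_energy_flux (hl α).ne' (hdx hH) (hdx (hu α)) (hdx hpa) (hdx hzb)).deriv,
    ← sum_add_distrib]
  refine (sum_congr rfl fun α _ => ?_).trans ((sum_layer_sources_eq l hlsum (G · x t)
    (uhalf · x t) (u · x t) hG0 hGtop (H x t * (deriv (fun τ => pa x τ) t
      + g * deriv (fun τ => zb x τ) t)) (pa x t + g * (H x t + zb x t))).trans (by ring))
  linear_combination u α x t * hmom α x t
    - (pa x t + g * (H x t + zb x t) - u α x t ^ 2 / 2) * hmass α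

/-- Energy balance for smooth solutions of the inviscid multilayer
Saint-Venant system with mass exchanges. There are `N + 1` layers indexed by
`Fin (N+1)` (0-based); the paper's interior interface `α + 1/2`
(α = 1,…,N_layers−1) corresponds to `β : Fin N`, sitting between layers
`β.castSucc` and `β.succ`, with exchange term `G (β+1)` and interface velocity
`uhalf (β+1)`. -/
theorem multilayer_energy_balance
    (N : ℕ) (g : ℝ) (hg : 0 < g)
    (l : Fin (N + 1) → ℝ) (hl : ∀ α, 0 < l α) (hlsum : ∑ α, l α = 1)
    (H pa zb : ℝ → ℝ → ℝ) (u : Fin (N + 1) → ℝ → ℝ → ℝ)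
    (hH : ContDiff ℝ 1 fun p : ℝ × ℝ => H p.1 p.2) (hHpos : ∀ x t, 0 < H x t)
    (hu : ∀ α, ContDiff ℝ 1 fun p : ℝ × ℝ => u α p.1 p.2)
    (hpa : ContDiff ℝ 1 fun p : ℝ × ℝ => pa p.1 p.2)
    (hzb : ContDiff ℝ 1 fun p : ℝ × ℝ => zb p.1 p.2)
    (uhalf : ℕ → ℝ → ℝ → ℝ)
    (huhalf : ∀ k, Continuous fun p : ℝ × ℝ => uhalf k p.1 p.2)
    (G : ℕ → ℝ → ℝ → ℝ)
    (hG : ∀ k x t, G k x t =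
      ∑ j ∈ Finset.univ.filter (fun j : Fin (N + 1) => (j : ℕ) < k),
        (deriv (fun τ => l j * H x τ) t + deriv (fun y => l j * H y t * u j y t) x))
    (hcont : ∀ x t, deriv (fun τ => H x τ) t
      + deriv (fun y => ∑ α, l α * H y t * u α y t) x = 0)
    (hmom : ∀ α : Fin (N + 1), ∀ x t,
      deriv (fun τ => l α * H x τ * u α x τ) t
        + deriv (fun y => l α * H y t * (u α y t) ^ 2
            + g / (2 * l α) * (l α * H y t) ^ 2) x
      = -(l α * H x t) * deriv (fun y => pa y t) x
        - g * (l α * H x t) * deriv (fun y => zb y t) x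
        + uhalf ((α : ℕ) + 1) x t * G ((α : ℕ) + 1) x t
        - uhalf (α : ℕ) x t * G (α : ℕ) x t)
    (E : Fin (N + 1) → ℝ → ℝ → ℝ)
    (hE : ∀ α y t, E α y t =
      l α * H y t * (u α y t) ^ 2 / 2
        + g * (l α * H y t) * ((H y t + zb y t) + zb y t) / 2
        + l α * H y t * pa y t) :
    ∀ x t,
      deriv (fun τ => ∑ α, E α x τ) t
        + deriv (fun y => ∑ α, u α y t * (E α y t + g / 2 * (l α * H y t) * H y t)) x
      = H x t * deriv (fun τ => pa x τ) t + g * H x t * deriv (fun τ => zb x τ) t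
        + ∑ β : Fin N,
            G ((β : ℕ) + 1) x t
              * (uhalf ((β : ℕ) + 1) x t
                  - (u β.castSucc x t + u β.succ x t) / 2)
              * (u β.castSucc x t - u β.succ x t) :=
  multilayer_energy_balance_general N g l hl hlsum H pa zb u hH hu hpa hzb uhalf G hG hcont hmom E
    hE
end
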